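/- arXiv:2109.07184 — 6 statements merged into one kernel-verified Lean document; each statement's English description precedes it below -/
import Mathlib

section
/- The inclusion map T : ℓ¹ → c₀ is unbounded M-weakly compact: for every norm bounded disjoint sequence (aₙ) in ℓ¹ and every u ∈ c₀⁺, ‖|aₙ| ∧ u‖_∞ → 0. -/
open Filter

/-- the inclusion `ℓ¹ → c₀` is unbounded M-weakly compact.
We represent elements of `ℓ¹` as absolutely summable real sequences, elements of
`c₀` as null sequences, and the sup norm as an `iSup`. -/
theorem inclusion_l1_c0_uMWeaklyCompact
    (a : ℕ → ℕ → ℝ)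
    (hsum : ∀ n, Summable fun k => |a n k|)
    (hbdd : ∃ C, ∀ n, (∑' k, |a n k|) ≤ C)
    (hdisj : ∀ n m, n ≠ m → ∀ k, min |a n k| |a m k| = 0)
    (u : ℕ → ℝ) (hu : ∀ k, 0 ≤ u k)
    (hu0 : Tendsto u atTop (nhds 0)) :
    Tendsto (fun n => ⨆ k, min |a n k| (u k)) atTop (nhds 0) := by
  classical
  obtain ⟨M, hM⟩ := hu0.bddAbove_range
  have hM' : ∀ k, u k ≤ M := fun k => hM ⟨k, rfl⟩
  have hbA : ∀ n, BddAbove (Set.range fun k => min |a n k| (u k)) := by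
    intro n
    exact ⟨M, by rintro x ⟨k, rfl⟩; exact le_trans (min_le_right _ _) (hM' k)⟩
  have hnonneg : ∀ n, 0 ≤ ⨆ k, min |a n k| (u k) := fun n =>
    le_trans (le_min (abs_nonneg _) (hu 0)) (le_ciSup (hbA n) 0)
  rw [Metric.tendsto_atTop]
  intro ε hε
  obtain ⟨K, hK⟩ := (Metric.tendsto_atTop.mp hu0) (ε / 2) (by linarith)
  have hK' : ∀ k, K ≤ k → u k ≤ ε / 2 := by
    intro k hk
    have := hK k hk
    rw [Real.dist_eq, sub_zero, abs_of_nonneg (hu k)] at this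
    linarith
  set g : ℕ → ℕ := fun k => if h : ∃ n, a n k ≠ 0 then h.choose + 1 else 0 with hg
  refine ⟨(Finset.range K).sup g, fun n hn => ?_⟩
  have hzero : ∀ k < K, a n k = 0 := by
    intro k hk
    by_contra h0
    have hex : ∃ m, a m k ≠ 0 := ⟨n, h0⟩
    have hch : a hex.choose k ≠ 0 := hex.choose_spec
    have hne : n = hex.choose := by
      by_contra hne
      rcases min_eq_iff.mp (hdisj n hex.choose hne k) with h | h
      · exact h0 (abs_eq_zero.mp h.1)
      · exact hch (abs_eq_zero.mp h.1)
    have hle : g k ≤ (Finset.range K).sup g := Finset.le_sup (Finset.mem_range.mpr hk)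
    have hgk : g k = hex.choose + 1 := dif_pos hex
    rw [hgk] at hle
    omega
  rw [Real.dist_eq, sub_zero, abs_of_nonneg (hnonneg n)]
  have hsup : (⨆ k, min |a n k| (u k)) ≤ ε / 2 := by
    apply ciSup_le
    intro k
    rcases lt_or_ge k K with hk | hk
    · have : min |a n k| (u k) = 0 := by
        rw [hzero k hk]; simp [min_eq_left (hu k)]
      rw [this]; linarith
    · exact le_trans (min_le_right _ _) (hK' k hk)
  linarith
end

section
/- The operator T : ℓ¹ → ℓ^∞ defined by T(a) = (s, s, s, …) where s = Σₙ aₙ, is a compact operator (it has rank one) but it is not unbounded M-weakly compact: with eₙ the standard unit vectors, ‖|T eₙ| ∧ 𝟙‖_∞ = 1 for all n, where 𝟙 = (1,1,1,…). -/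
open Filter

lemma lp_one_summable (a : lp (fun _ : ℕ => ℝ) 1) : Summable (a : ℕ → ℝ) := by
  have := (lp.memℓp a).summable (p := 1) (by norm_num)
  simp only [ENNReal.toReal_one, Real.rpow_one] at this
  exact this.of_norm

noncomputable def sumCLM : lp (fun _ : ℕ => ℝ) 1 →L[ℝ] ℝ :=
  LinearMap.mkContinuous
    { toFun := fun a => ∑' n, (a : ℕ → ℝ) n
      map_add' := fun a b => by
        simpa using Summable.tsum_add (lp_one_summable a) (lp_one_summable b)
      map_smul' := fun c a => by
        simp [smul_eq_mul, tsum_mul_left] }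
    1
    (fun a => by
      have ha : Summable fun n => ‖(a : ℕ → ℝ) n‖ := (lp_one_summable a).abs
      have h1 : ‖∑' n, (a : ℕ → ℝ) n‖ ≤ ∑' n, ‖(a : ℕ → ℝ) n‖ := norm_tsum_le_tsum_norm ha
      have h2 : ‖a‖ = ∑' n, ‖(a : ℕ → ℝ) n‖ := by
        rw [lp.norm_eq_tsum_rpow (by norm_num) a]; simp
      simpa [h2] using h1)

noncomputable def constCLM : ℝ →L[ℝ] lp (fun _ : ℕ => ℝ) ⊤ :=
  LinearMap.mkContinuous
    { toFun := fun r => ⟨fun _ => r, memℓp_infty ⟨‖r‖, by rintro x ⟨i, rfl⟩; simp⟩⟩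
      map_add' := fun r s => rfl
      map_smul' := fun c r => rfl }
    1
    (fun r => by
      rw [one_mul]
      apply lp.norm_le_of_forall_le (norm_nonneg r)
      intro i; rfl)

/-- the operator `T : ℓ¹ → ℓ^∞`, `T a = (s, s, s, …)` with
`s = ∑ₙ aₙ`, is a compact operator but is not unbounded M-weakly compact:
`‖|T eₙ| ∧ 𝟙‖_∞ = 1` for every `n` (the lattice operations of `ℓ^∞` being the
pointwise ones, and the sup norm an `iSup`). -/
theorem summing_operator_compact_not_uMWeaklyCompact :
    ∃ T : lp (fun _ : ℕ => ℝ) 1 →L[ℝ] lp (fun _ : ℕ => ℝ) ⊤,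
      (∀ (a : lp (fun _ : ℕ => ℝ) 1) (k : ℕ), (T a : ℕ → ℝ) k = ∑' n, (a : ℕ → ℝ) n) ∧
      IsCompactOperator T ∧
      (∀ n : ℕ, (⨆ k : ℕ, min |(T (lp.single 1 n (1 : ℝ)) : ℕ → ℝ) k| 1) = 1) ∧
      ¬ Tendsto
        (fun n : ℕ => ⨆ k : ℕ, min |(T (lp.single 1 n (1 : ℝ)) : ℕ → ℝ) k| 1)
        atTop (nhds 0) := by
  refine ⟨constCLM.comp sumCLM, fun a k => rfl, ?_, ?_, ?_⟩
  · have hsum : IsCompactOperator (sumCLM : lp (fun _ : ℕ => ℝ) 1 →L[ℝ] ℝ) := by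
      refine ⟨Metric.closedBall 0 ‖(sumCLM : lp (fun _ : ℕ => ℝ) 1 →L[ℝ] ℝ)‖,
        isCompact_closedBall 0 _, ?_⟩
      filter_upwards [Metric.closedBall_mem_nhds (0 : lp (fun _ : ℕ => ℝ) 1) one_pos] with x hx
      simp only [Set.mem_preimage, Metric.mem_closedBall, dist_zero_right] at hx ⊢
      calc ‖sumCLM x‖ ≤ ‖sumCLM‖ * ‖x‖ := sumCLM.le_opNorm x
        _ ≤ ‖sumCLM‖ * 1 := by
            exact mul_le_mul_of_nonneg_left hx (norm_nonneg _)
        _ = ‖sumCLM‖ := mul_one _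
    exact hsum.continuous_comp constCLM.continuous
  all_goals
    have key : ∀ n k : ℕ,
        (constCLM.comp sumCLM (lp.single 1 n (1 : ℝ)) : ℕ → ℝ) k = 1 := by
      intro n k
      show ∑' m, (lp.single 1 n (1 : ℝ) : ℕ → ℝ) m = 1
      rw [tsum_eq_single n]
      · simp [lp.single_apply_self]
      · intro m hm; exact lp.single_apply_ne 1 n _ hm
  · intro n
    simp only [key n]
    norm_num
  · intro h
    have heq : ∀ n : ℕ, (⨆ k : ℕ, min |(constCLM.comp sumCLM (lp.single 1 n (1 : ℝ)) : ℕ → ℝ) k| 1) = 1 := by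
      intro n; simp only [key n]; norm_num
    simp only [heq] at h
    have := tendsto_nhds_unique h tendsto_const_nhds
    norm_num at this
end

section
/- If F is a Banach lattice with a strong unit, then un-convergence in F agrees with norm convergence; consequently, a continuous operator T : E → F between Banach lattices is u-M-weakly compact if and only if it is M-weakly compact. -/
/-
By Baire category the order interval `{z | |z| ≤ e}` of a strong unit `e` is a neighbourhood
of `0`, say it contains the closed ball of radius `r`. Then `‖|y| ⊓ e‖ ≥ min ‖y‖ r` for all `y`,
so un-convergence to `0` (tested against `e` alone) already forces norm convergence; the
converse holds in any normed lattice.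
-/

open Filter

/-- A sequence in a normed lattice is unbounded norm (un-) convergent to `0`. -/
def UnNullSeq {F : Type*} [NormedAddCommGroup F] [Lattice F] [HasSolidNorm F] [IsOrderedAddMonoid F] (y : ℕ → F) : Prop :=
  ∀ w : F, 0 ≤ w → Tendsto (fun n => ‖|y n| ⊓ w‖) atTop (nhds 0)

open Topology

lemma nonneg_of_two_pow_nsmul_nonneg {G : Type*} [AddCommGroup G] [Lattice G]
    [IsOrderedAddMonoid G] {a : G} (k : ℕ) (h : 0 ≤ 2 ^ k • a) : 0 ≤ a := by
  induction k generalizing a with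
  | zero => simpa using h
  | succ k ih => exact nsmul_two_semiclosed (ih (by rwa [← mul_nsmul', ← pow_succ]))

/- A closed positive cone of a real vector lattice is automatically closed under multiplication
by nonnegative scalars: dyadic multiples are handled by halving, the rest by approximation. -/
instance OrderClosedTopology.posSMulMono_real {F : Type*} [AddCommGroup F] [Lattice F]
    [IsOrderedAddMonoid F] [Module ℝ F] [TopologicalSpace F] [ContinuousSMul ℝ F]
    [OrderClosedTopology F] : PosSMulMono ℝ F := by
  refine .of_smul_nonneg fun c hc v hv => ?_
  have dyadic (m k : ℕ) : 0 ≤ ((m : ℝ) / 2 ^ k) • v := by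
    refine nonneg_of_two_pow_nsmul_nonneg k ?_
    rw [← Nat.cast_smul_eq_nsmul ℝ, smul_smul, Nat.cast_pow, Nat.cast_ofNat,
      mul_div_cancel₀ _ (by positivity), Nat.cast_smul_eq_nsmul]
    exact nsmul_nonneg hv m
  have approx : Tendsto (fun k : ℕ => (⌊c * 2 ^ k⌋₊ : ℝ) / 2 ^ k) atTop (𝓝 c) :=
    (tendsto_nat_floor_mul_div_atTop hc).comp (tendsto_pow_atTop_atTop_of_one_lt one_lt_two)
  exact ge_of_tendsto (approx.smul_const v) (Eventually.of_forall fun k => dyadic _ k)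

lemma abs_smul_of_nonneg {𝕜 M : Type*} [Field 𝕜] [LinearOrder 𝕜] [IsStrictOrderedRing 𝕜]
    [AddCommGroup M] [Lattice M] [IsOrderedAddMonoid M] [Module 𝕜 M] [PosSMulMono 𝕜 M]
    {c : 𝕜} (hc : 0 ≤ c) (a : M) : |c • a| = c • |a| := by
  rcases hc.eq_or_lt with rfl | hc
  · simp
  · rw [abs, abs, ← smul_neg]
    exact ((OrderIso.smulRight hc).map_sup a (-a)).symm

lemma unNullSeq_of_tendsto_norm {F : Type*} [NormedAddCommGroup F] [Lattice F] [HasSolidNorm F]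
    [IsOrderedAddMonoid F] {y : ℕ → F} (hy : Tendsto (fun n => ‖y n‖) atTop (𝓝 0)) :
    UnNullSeq y := by
  refine fun w hw => squeeze_zero (fun n => norm_nonneg _) (fun n => ?_) hy
  rw [← norm_abs_eq_norm (y n)]
  refine norm_le_norm_of_abs_le_abs ?_
  rw [abs_of_nonneg (le_inf (abs_nonneg _) hw), abs_abs]
  exact inf_le_left

section StrongUnit

variable {F : Type*} [NormedAddCommGroup F] [Lattice F] [HasSolidNorm F] [IsOrderedAddMonoid F]
  [NormedSpace ℝ F] {e : F}

/- Baire category: the closed sets `{x | |x| ≤ (k + 1) • e}` cover `F`, so one of them is a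
neighbourhood of some `x₀`, and `|z| ≤ |x₀ + z| + |x₀|` moves this to `0`. -/
lemma exists_setOf_abs_le_smul_mem_nhds_zero [CompleteSpace F] (he : 0 ≤ e)
    (hunit : ∀ x : F, ∃ l : ℝ, 0 < l ∧ |x| ≤ l • e) :
    ∃ c : ℝ, 0 < c ∧ {z : F | |z| ≤ c • e} ∈ 𝓝 0 := by
  set A : ℕ → Set F := fun k => {x | |x| ≤ ((k + 1 : ℕ) : ℝ) • e}
  have hclosed (k : ℕ) : IsClosed (A k) :=
    isClosed_le (continuous_id.sup continuous_neg) continuous_const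
  have hcover : ⋃ k, A k = Set.univ := by
    refine Set.eq_univ_of_forall fun x => Set.mem_iUnion.2 ?_
    obtain ⟨l, -, hl⟩ := hunit x
    refine ⟨⌈l⌉₊, hl.trans (smul_le_smul_of_nonneg_right ?_ he)⟩
    exact (Nat.le_ceil l).trans (by norm_num)
  obtain ⟨k, x₀, hint⟩ := nonempty_interior_of_iUnion_of_closed hclosed hcover
  have hA : A k ∈ 𝓝 x₀ := mem_interior_iff_mem_nhds.1 hint
  have hshift : {z : F | x₀ + z ∈ A k} ∈ 𝓝 0 :=
    (continuous_const_add x₀).continuousAt.preimage_mem_nhds (by rwa [add_zero])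
  refine ⟨2 * ((k + 1 : ℕ) : ℝ), by positivity, mem_of_superset hshift fun z hz => ?_⟩
  have hx₀ : x₀ ∈ A k := mem_of_mem_nhds hA
  calc |z| = |(x₀ + z) + -x₀| := by rw [add_neg_cancel_comm]
    _ ≤ |x₀ + z| + |x₀| := (abs_add_le _ _).trans_eq (by rw [abs_neg])
    _ ≤ ((k + 1 : ℕ) : ℝ) • e + ((k + 1 : ℕ) : ℝ) • e := add_le_add hz hx₀
    _ = (2 * ((k + 1 : ℕ) : ℝ)) • e := by rw [← two_smul ℝ, smul_smul]

lemma setOf_abs_le_mem_nhds_zero_of_strongUnit [CompleteSpace F] (he : 0 ≤ e)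
    (hunit : ∀ x : F, ∃ l : ℝ, 0 < l ∧ |x| ≤ l • e) :
    {z : F | |z| ≤ e} ∈ 𝓝 0 := by
  obtain ⟨c, hc, hnhds⟩ := exists_setOf_abs_le_smul_mem_nhds_zero he hunit
  have := (continuous_const_smul c).continuousAt.preimage_mem_nhds (x := (0 : F))
    (by rwa [smul_zero])
  simpa only [Set.preimage_ofPred_eq, abs_smul_of_nonneg hc.le,
    smul_le_smul_iff_of_pos_left hc] using this

/- Below the radius `r` the truncation does nothing; above it, `(r / ‖y‖) • |y|` lies below
both `|y|` and `e`. -/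
lemma min_norm_le_norm_abs_inf {r : ℝ} (hr₀ : 0 ≤ r)
    (hr : Metric.closedBall 0 r ⊆ {z : F | |z| ≤ e}) (y : F) :
    min ‖y‖ r ≤ ‖|y| ⊓ e‖ := by
  rcases le_or_gt ‖y‖ r with hy | hy
  · rw [inf_eq_left.2 (hr (mem_closedBall_zero_iff.2 hy)), norm_abs_eq_norm]
    exact min_le_left _ _
  set t := r / ‖y‖
  have ht₀ : 0 ≤ t := div_nonneg hr₀ (norm_nonneg y)
  have hty : t * ‖y‖ = r := div_mul_cancel₀ r (hr₀.trans_lt hy).ne'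
  have hle_e : t • |y| ≤ e := by
    rw [← abs_smul_of_nonneg ht₀]
    exact hr (mem_closedBall_zero_iff.2 (by rw [norm_smul, Real.norm_of_nonneg ht₀, hty]))
  have hle_abs : t • |y| ≤ |y| :=
    smul_le_of_le_one_left (abs_nonneg y) (div_le_one_of_le₀ hy.le (norm_nonneg y))
  have hnonneg : 0 ≤ t • |y| := smul_nonneg ht₀ (abs_nonneg y)
  calc min ‖y‖ r ≤ r := min_le_right _ _
    _ = ‖t • |y|‖ := by rw [norm_smul, Real.norm_of_nonneg ht₀, norm_abs_eq_norm, hty]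
    _ ≤ ‖|y| ⊓ e‖ := by
      refine norm_le_norm_of_abs_le_abs ?_
      rw [abs_of_nonneg hnonneg, abs_of_nonneg (hnonneg.trans (le_inf hle_abs hle_e))]
      exact le_inf hle_abs hle_e

lemma unNullSeq_iff_tendsto_norm_of_strongUnit [CompleteSpace F] (he : 0 ≤ e)
    (hunit : ∀ x : F, ∃ l : ℝ, 0 < l ∧ |x| ≤ l • e) (y : ℕ → F) :
    UnNullSeq y ↔ Tendsto (fun n => ‖y n‖) atTop (𝓝 0) := by
  refine ⟨fun hy => ?_, unNullSeq_of_tendsto_norm⟩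
  obtain ⟨r, hr, hball⟩ :=
    Metric.nhds_basis_closedBall.mem_iff.1 (setOf_abs_le_mem_nhds_zero_of_strongUnit he hunit)
  have hmin : Tendsto (fun n => min ‖y n‖ r) atTop (𝓝 0) :=
    squeeze_zero (fun n => le_min (norm_nonneg _) hr.le)
      (fun n => min_norm_le_norm_abs_inf hr.le hball (y n)) (hy e he)
  refine hmin.congr' ((hmin.eventually (gt_mem_nhds hr)).mono fun n hn => ?_)
  exact min_eq_left ((min_lt_iff.1 hn).resolve_right (lt_irrefl r)).le

end StrongUnit

theorem uMWeaklyCompact_iff_mWeaklyCompact_of_strongUnit_general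
    {E F : Type*} [NormedAddCommGroup E] [Lattice E] [NormedSpace ℝ E]
    [NormedAddCommGroup F] [Lattice F] [HasSolidNorm F] [IsOrderedAddMonoid F] [NormedSpace ℝ F] [CompleteSpace F]
    (e : F) (he : 0 ≤ e) (hunit : ∀ x : F, ∃ l : ℝ, 0 < l ∧ |x| ≤ l • e)
    (T : E →L[ℝ] F) :
    (∀ y : ℕ → F, (UnNullSeq y ↔ Tendsto (fun n => ‖y n‖) atTop (nhds 0))) ∧
    ((∀ x : ℕ → E, (∃ C, ∀ n, ‖x n‖ ≤ C) →
        (∀ n m, n ≠ m → |x n| ⊓ |x m| = 0) →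
        UnNullSeq (fun n => T (x n))) ↔
      (∀ x : ℕ → E, (∃ C, ∀ n, ‖x n‖ ≤ C) →
        (∀ n m, n ≠ m → |x n| ⊓ |x m| = 0) →
        Tendsto (fun n => ‖T (x n)‖) atTop (nhds 0))) := by
  have hun := unNullSeq_iff_tendsto_norm_of_strongUnit he hunit
  exact ⟨hun, forall_congr' fun x => imp_congr_right fun _ => imp_congr_right fun _ => hun _⟩

/-- if `F` has a strong unit, then un-convergence agrees with norm
convergence, and hence `T : E → F` is u-M-weakly compact iff it is M-weakly
compact. -/
theorem uMWeaklyCompact_iff_mWeaklyCompact_of_strongUnit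
    {E F : Type*} [NormedAddCommGroup E] [Lattice E] [HasSolidNorm E] [IsOrderedAddMonoid E] [NormedSpace ℝ E] [CompleteSpace E]
    [NormedAddCommGroup F] [Lattice F] [HasSolidNorm F] [IsOrderedAddMonoid F] [NormedSpace ℝ F] [CompleteSpace F]
    (e : F) (he : 0 ≤ e) (hunit : ∀ x : F, ∃ l : ℝ, 0 < l ∧ |x| ≤ l • e)
    (T : E →L[ℝ] F) :
    (∀ y : ℕ → F, (UnNullSeq y ↔ Tendsto (fun n => ‖y n‖) atTop (nhds 0))) ∧
    ((∀ x : ℕ → E, (∃ C, ∀ n, ‖x n‖ ≤ C) →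
        (∀ n m, n ≠ m → |x n| ⊓ |x m| = 0) →
        UnNullSeq (fun n => T (x n))) ↔
      (∀ x : ℕ → E, (∃ C, ∀ n, ‖x n‖ ≤ C) →
        (∀ n m, n ≠ m → |x n| ⊓ |x m| = 0) →
        Tendsto (fun n => ‖T (x n)‖) atTop (nhds 0))) :=
  uMWeaklyCompact_iff_mWeaklyCompact_of_strongUnit_general e he hunit T
end

section
/- In a Banach lattice with strong unit e, a sequence (yₙ) is un-convergent to 0 if and only if it is norm convergent to 0; in fact ‖|yₙ| ∧ λe‖-convergence to 0 for some λ bounding the sequence suffices. -/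
/-!
Norm convergence gives un-convergence because `‖|yₙ| ⊓ w‖ ≤ ‖yₙ‖` for a solid norm. Conversely,
Baire's theorem applied to the closed sets `{x | |x| ≤ k • e}` shows that every order interval
`[-ε • e, ε • e]` is a norm neighbourhood of `0`, so `‖|yₙ| ⊓ e‖ → 0` forces `|yₙ| ⊓ e ≤ ε • e`
eventually. In a lattice-ordered group, `a ⊓ e ≤ ε • e` with `ε < 1` and `a ≤ l • e` already gives
`a ≤ ε • e`: `(a - ε • e)⁺` is disjoint from `(1 - ε) • e`, hence from all its multiples, one of
which dominates it. Hence `|yₙ| ≤ ε • e` eventually, i.e. `‖yₙ‖ ≤ ε * ‖e‖`.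
-/

open Filter Topology

section LatticeOrderedGroup

variable {α : Type*} [Lattice α] [AddCommGroup α] [IsOrderedAddMonoid α]

lemma add_inf_le_inf_add_inf {a b c : α} (ha : 0 ≤ a) (hb : 0 ≤ b) (hc : 0 ≤ c) :
    (a + b) ⊓ c ≤ a ⊓ c + b ⊓ c := by
  have hb_right : (a + b) ⊓ c ≤ a ⊓ c + b := by
    calc (a + b) ⊓ c ≤ (a + b) ⊓ (c + b) := inf_le_inf_left _ (le_add_of_nonneg_right hb)
      _ = a ⊓ c + b := (inf_add a c b).symm
  have hc_right : (a + b) ⊓ c ≤ a ⊓ c + c :=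
    inf_le_right.trans (le_add_of_nonneg_left (le_inf ha hc))
  calc (a + b) ⊓ c ≤ (a ⊓ c + b) ⊓ (a ⊓ c + c) := le_inf hb_right hc_right
    _ = a ⊓ c + b ⊓ c := (add_inf _ _ _).symm

lemma inf_nsmul_eq_zero {a b : α} (ha : 0 ≤ a) (hb : 0 ≤ b) (h : a ⊓ b = 0) (n : ℕ) :
    a ⊓ n • b = 0 := by
  induction n with
  | zero => simpa using ha
  | succ k ih =>
    refine le_antisymm ?_ (le_inf ha (nsmul_nonneg hb _))
    calc a ⊓ (k + 1) • b = (k • b + b) ⊓ a := by rw [succ_nsmul, inf_comm]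
      _ ≤ k • b ⊓ a + b ⊓ a := add_inf_le_inf_add_inf (nsmul_nonneg hb _) hb ha
      _ = 0 := by rw [inf_comm, ih, inf_comm, h, add_zero]

lemma nonpos_of_inf_nonpos_of_le_nsmul {a c : α} {n : ℕ} (hc : 0 ≤ c) (h : a ⊓ c ≤ 0)
    (ha : a ≤ n • c) : a ≤ 0 := by
  let := AddCommGroup.toDistribLattice α
  have hdisj : a⁺ ⊓ c = 0 := by
    refine le_antisymm ?_ (le_inf (posPart_nonneg a) hc)
    calc a⁺ ⊓ c = a ⊓ c ⊔ 0 ⊓ c := inf_sup_right a 0 c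
      _ ≤ 0 := sup_le h inf_le_left
  have hle : a⁺ ≤ n • c := sup_le ha (nsmul_nonneg hc n)
  rw [← posPart_eq_zero, ← inf_eq_left.mpr hle]
  exact inf_nsmul_eq_zero (posPart_nonneg a) hc hdisj n

lemma nonneg_of_nsmul_nonneg {a : α} {n : ℕ} (hn : n ≠ 0) (h : 0 ≤ n • a) : 0 ≤ a := by
  have hneg : a⁻ ≤ n • a⁺ := by
    calc a⁻ ≤ n • a⁻ := le_smul_of_one_le_left (negPart_nonneg a) (Nat.one_le_iff_ne_zero.mpr hn)
      _ ≤ n • a⁺ := by rwa [← sub_nonneg, ← nsmul_sub, posPart_sub_negPart]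
  have hdisj : a⁻ ⊓ a⁺ ≤ 0 := by rw [inf_comm, posPart_inf_negPart_eq_zero]
  rw [← negPart_eq_zero]
  exact le_antisymm (nonpos_of_inf_nonpos_of_le_nsmul (posPart_nonneg a) hdisj hneg)
    (negPart_nonneg a)

end LatticeOrderedGroup

section OrderedModule

variable {𝕜 M : Type*} [Field 𝕜] [LinearOrder 𝕜] [IsStrictOrderedRing 𝕜]
  [Lattice M] [AddCommGroup M] [IsOrderedAddMonoid M] [Module 𝕜 M]

lemma abs_ratCast_smul_nonneg (q : ℚ) {a : M} (ha : 0 ≤ a) : 0 ≤ |(q : 𝕜)| • a := by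
  refine nonneg_of_nsmul_nonneg q.den_nz ?_
  have hden : (q.den : 𝕜) * |(q : 𝕜)| = q.num.natAbs := by
    rw [Rat.cast_def, abs_div, Nat.abs_cast, mul_div_cancel₀ _ (by positivity), Nat.cast_natAbs,
      Int.cast_abs]
  rw [← Nat.cast_smul_eq_nsmul 𝕜, smul_smul, hden, Nat.cast_smul_eq_nsmul]
  exact nsmul_nonneg ha _

variable [PosSMulMono 𝕜 M]

lemma abs_smul_of_nonneg_s6 {c : 𝕜} (hc : 0 ≤ c) (x : M) : |c • x| = c • |x| := by
  rcases hc.eq_or_lt with rfl | hc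
  · simp
  · rw [abs, abs, ← smul_neg]
    exact ((OrderIso.smulRight hc).map_sup x (-x)).symm

lemma le_smul_of_inf_le_smul [Archimedean 𝕜] {e a : M} {ε l : 𝕜} (he : 0 ≤ e) (hε : ε < 1)
    (ha : a ≤ l • e) (h : a ⊓ e ≤ ε • e) : a ≤ ε • e := by
  obtain ⟨n, hn⟩ := exists_nat_ge ((l - ε) / (1 - ε))
  have hc : 0 ≤ (1 - ε) • e := smul_nonneg (sub_nonneg.mpr hε.le) he
  have hinf : (a - ε • e) ⊓ (1 - ε) • e ≤ 0 := by
    rw [sub_smul, one_smul, ← inf_sub, sub_nonpos]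
    exact h
  have hbound : a - ε • e ≤ n • (1 - ε) • e := by
    calc a - ε • e ≤ (l - ε) • e := by rw [sub_smul]; exact sub_le_sub_right ha _
      _ ≤ ((n : 𝕜) * (1 - ε)) • e :=
        smul_le_smul_of_nonneg_right ((div_le_iff₀ (sub_pos.mpr hε)).mp hn) he
      _ = n • (1 - ε) • e := by rw [mul_smul, Nat.cast_smul_eq_nsmul]
  exact sub_nonpos.mp (nonpos_of_inf_nonpos_of_le_nsmul hc hinf hbound)

end OrderedModule

section SolidNorm

variable {F : Type*} [NormedAddCommGroup F] [Lattice F] [HasSolidNorm F] [IsOrderedAddMonoid F]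

lemma norm_abs_inf_le_norm {w : F} (hw : 0 ≤ w) (x : F) : ‖|x| ⊓ w‖ ≤ ‖x‖ := by
  rw [← norm_abs_eq_norm x]
  exact norm_le_norm_of_abs_le_abs (by
    rw [abs_of_nonneg (le_inf (abs_nonneg x) hw), abs_abs]; exact inf_le_left)

variable [NormedSpace ℝ F]

instance HasSolidNorm.toIsOrderedModule : IsOrderedModule ℝ F := by
  refine IsOrderedModule.of_smul_nonneg fun c hc a ha => ?_
  have habs : ∀ t : ℝ, 0 ≤ |t| • a :=
    isClosed_property Rat.denseRange_cast
      (isClosed_nonneg.preimage (continuous_abs.smul continuous_const))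
      fun q => abs_ratCast_smul_nonneg q ha
  simpa [abs_of_nonneg hc] using habs c

lemma exists_pos_eventually_nhds_zero_abs_le_smul [CompleteSpace F] {e : F} (he : 0 ≤ e)
    (hunit : ∀ x : F, ∃ c : ℝ, |x| ≤ c • e) :
    ∃ r : ℝ, 0 < r ∧ ∀ᶠ x in 𝓝 (0 : F), |x| ≤ r • e := by
  let S : ℕ → Set F := fun k => {x | |x| ≤ ((k : ℝ) + 1) • e}
  have hS_closed : ∀ k, IsClosed (S k) := fun k =>
    isClosed_le (continuous_id.sup continuous_neg) continuous_const
  have hS_cover : ⋃ k, S k = Set.univ := by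
    refine Set.eq_univ_of_forall fun x => ?_
    obtain ⟨c, hc⟩ := hunit x
    obtain ⟨k, hk⟩ := exists_nat_ge c
    exact Set.mem_iUnion.mpr ⟨k, hc.trans (smul_le_smul_of_nonneg_right (by linarith) he)⟩
  obtain ⟨k, x₀, hx₀⟩ := nonempty_interior_of_iUnion_of_closed hS_closed hS_cover
  have hnear : ∀ᶠ x in 𝓝 (0 : F), x₀ + x ∈ S k := by
    have := (continuous_const_add x₀).tendsto (0 : F)
    rw [add_zero] at this
    exact this.eventually (mem_interior_iff_mem_nhds.mp hx₀)
  refine ⟨2 * ((k : ℝ) + 1), by positivity, hnear.mono fun x hx => ?_⟩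
  calc |x| = |(x₀ + x) + -x₀| := by rw [add_neg_cancel_comm]
    _ ≤ |x₀ + x| + |x₀| := (abs_add_le _ _).trans_eq (by rw [abs_neg])
    _ ≤ ((k : ℝ) + 1) • e + ((k : ℝ) + 1) • e := add_le_add hx (interior_subset hx₀ : x₀ ∈ S k)
    _ = (2 * ((k : ℝ) + 1)) • e := by rw [two_mul]; exact (add_smul _ _ _).symm

lemma eventually_nhds_zero_abs_le_smul [CompleteSpace F] {e : F} (he : 0 ≤ e)
    (hunit : ∀ x : F, ∃ c : ℝ, |x| ≤ c • e) {ε : ℝ} (hε : 0 < ε) :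
    ∀ᶠ x in 𝓝 (0 : F), |x| ≤ ε • e := by
  obtain ⟨r, hr, hbound⟩ := exists_pos_eventually_nhds_zero_abs_le_smul he hunit
  have hscale : Tendsto (fun x : F => (r / ε) • x) (𝓝 0) (𝓝 0) := by
    simpa using (tendsto_id (x := 𝓝 (0 : F))).const_smul (r / ε)
  filter_upwards [hscale.eventually hbound] with x hx
  rw [abs_smul_of_nonneg_s6 (by positivity)] at hx
  calc |x| = (ε / r) • (r / ε) • |x| := by
        rw [smul_smul, div_mul_div_cancel₀ hr.ne', div_self hε.ne', one_smul]
    _ ≤ (ε / r) • r • e := smul_le_smul_of_nonneg_left hx (by positivity)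
    _ = ε • e := by rw [smul_smul, div_mul_cancel₀ _ hr.ne']

lemma eventually_abs_le_smul_of_tendsto_abs_inf [CompleteSpace F] {ι : Type*} {l : Filter ι}
    {y : ι → F} {e : F} (he : 0 ≤ e) (hunit : ∀ x : F, ∃ c : ℝ, |x| ≤ c • e)
    (hy : Tendsto (fun n => |y n| ⊓ e) l (𝓝 0)) {ε : ℝ} (hε : 0 < ε) :
    ∀ᶠ n in l, |y n| ≤ ε • e := by
  set δ := min ε (1 / 2)
  have hδ : 0 < δ := lt_min hε (by norm_num)
  have hδ_lt : δ < 1 := (min_le_right _ _).trans_lt (by norm_num)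
  filter_upwards [hy.eventually (eventually_nhds_zero_abs_le_smul he hunit hδ)] with n hn
  obtain ⟨m, hm⟩ := hunit (y n)
  rw [abs_of_nonneg (le_inf (abs_nonneg _) he)] at hn
  calc |y n| ≤ δ • e := le_smul_of_inf_le_smul he hδ_lt hm hn
    _ ≤ ε • e := smul_le_smul_of_nonneg_right (min_le_left _ _) he

end SolidNorm

lemma tendsto_nhds_zero_of_eventually_abs_le_smul {F : Type*} [NormedAddCommGroup F] [Lattice F]
    [HasSolidNorm F] [NormedSpace ℝ F] {ι : Type*} {l : Filter ι} {y : ι → F}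
    (e : F) (h : ∀ ε : ℝ, 0 < ε → ∀ᶠ n in l, |y n| ≤ ε • e) : Tendsto y l (𝓝 0) := by
  refine NormedAddGroup.tendsto_nhds_zero.mpr fun η hη => ?_
  have hε : 0 < η / (‖e‖ + 1) := by positivity
  filter_upwards [h _ hε] with n hn
  calc ‖y n‖ ≤ ‖(η / (‖e‖ + 1)) • e‖ := norm_le_norm_of_abs_le_abs (hn.trans (le_abs_self _))
    _ = η / (‖e‖ + 1) * ‖e‖ := by rw [norm_smul, Real.norm_of_nonneg hε.le]
    _ < η := by
      rw [div_mul_eq_mul_div, div_lt_iff₀ (by positivity)]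
      nlinarith [norm_nonneg e]

/-- in a Banach lattice with a strong unit `e`, a sequence is
un-convergent to `0` iff it is norm convergent to `0`; in fact, for any `l > 0`
bounding the sequence (`|yₙ| ≤ l • e`), `‖|yₙ| ∧ l • e‖ → 0` already implies
norm convergence to `0`. -/
theorem unNull_iff_normNull_of_strongUnit
    {F : Type*} [NormedAddCommGroup F] [Lattice F] [HasSolidNorm F] [IsOrderedAddMonoid F] [NormedSpace ℝ F] [CompleteSpace F]
    (e : F) (he : 0 ≤ e) (hunit : ∀ x : F, ∃ l : ℝ, 0 < l ∧ |x| ≤ l • e)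
    (y : ℕ → F) :
    (UnNullSeq y ↔ Tendsto (fun n => ‖y n‖) atTop (nhds 0)) ∧
    (∀ l : ℝ, 0 < l → (∀ n, |y n| ≤ l • e) →
      Tendsto (fun n => ‖|y n| ⊓ l • e‖) atTop (nhds 0) →
      Tendsto (fun n => ‖y n‖) atTop (nhds 0)) := by
  have hunit' : ∀ x : F, ∃ c : ℝ, |x| ≤ c • e := fun x => (hunit x).imp fun _ => And.right
  refine ⟨⟨fun hun => ?_, fun hy w hw => ?_⟩, fun l _ hbound h => ?_⟩
  · have hinf : Tendsto (fun n => |y n| ⊓ e) atTop (𝓝 0) :=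
      tendsto_zero_iff_norm_tendsto_zero.mpr (hun e he)
    exact tendsto_zero_iff_norm_tendsto_zero.mp <| tendsto_nhds_zero_of_eventually_abs_le_smul e
      fun ε hε => eventually_abs_le_smul_of_tendsto_abs_inf he hunit' hinf hε
  · exact squeeze_zero (fun _ => norm_nonneg _) (fun n => norm_abs_inf_le_norm hw (y n)) hy
  · simpa only [inf_eq_left.mpr (hbound _), norm_abs_eq_norm] using h
end

section
/- The set of u-M-weakly compact operators from E to F is norm closed in the space of bounded operators: if Tₖ → T in operator norm and each Tₖ is u-M-weakly compact, then T is u-M-weakly compact. -/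
/-! Since `‖|a| ⊓ w‖ ≤ ‖a - b‖ + ‖|b| ⊓ w‖`, un-null sequences are closed under uniform limits;
operator norm convergence `Tₖ → S` makes `Tₖ xₙ → S xₙ` uniformly in `n` on a bounded sequence `(xₙ)`. -/

open Filter

/-- `T` is unbounded M-weakly compact. -/
def UMWeaklyCompact {E F : Type*} [NormedAddCommGroup E] [Lattice E] [HasSolidNorm E] [IsOrderedAddMonoid E] [NormedSpace ℝ E]
    [NormedAddCommGroup F] [Lattice F] [HasSolidNorm F] [IsOrderedAddMonoid F] [NormedSpace ℝ F] (T : E →L[ℝ] F) : Prop :=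
  ∀ x : ℕ → E, (∃ C, ∀ n, ‖x n‖ ≤ C) → (∀ n m, n ≠ m → |x n| ⊓ |x m| = 0) →
    UnNullSeq (fun n => T (x n))

theorem norm_abs_inf_le_norm_sub_add {F : Type*} [NormedAddCommGroup F] [Lattice F] [HasSolidNorm F]
    [IsOrderedAddMonoid F] (a b w : F) : ‖|a| ⊓ w‖ ≤ ‖a - b‖ + ‖|b| ⊓ w‖ :=
  calc ‖|a| ⊓ w‖ ≤ ‖|a| ⊓ w - |b| ⊓ w‖ + ‖|b| ⊓ w‖ := norm_le_norm_sub_add _ _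
    _ ≤ ‖a - b‖ + ‖|b| ⊓ w‖ := by
      gcongr
      exact (norm_inf_sub_inf_le_norm _ _ _).trans (norm_abs_sub_abs _ _)

theorem UnNullSeq.of_tendstoUniformly {F ι : Type*} [NormedAddCommGroup F] [Lattice F]
    [HasSolidNorm F] [IsOrderedAddMonoid F] {p : Filter ι} [p.NeBot] {z : ι → ℕ → F} {y : ℕ → F}
    (hz : ∀ k, UnNullSeq (z k)) (hzy : TendstoUniformly z y p) : UnNullSeq y := by
  intro w hw
  rw [NormedAddGroup.tendsto_nhds_zero]
  intro ε hε
  obtain ⟨k, hk⟩ := (Metric.tendstoUniformly_iff.1 hzy (ε / 2) (half_pos hε)).exists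
  filter_upwards [NormedAddGroup.tendsto_nhds_zero.1 (hz k w hw) (ε / 2) (half_pos hε)]
    with n hn
  rw [norm_norm] at hn ⊢
  calc ‖|y n| ⊓ w‖ ≤ ‖y n - z k n‖ + ‖|z k n| ⊓ w‖ := norm_abs_inf_le_norm_sub_add _ _ _
    _ < ε / 2 + ε / 2 := add_lt_add (by simpa [dist_eq_norm] using hk n) hn
    _ = ε := add_halves ε

theorem ContinuousLinearMap.tendstoUniformly_apply_of_tendsto {𝕜 E F ι κ : Type*}
    [NontriviallyNormedField 𝕜] [SeminormedAddCommGroup E] [NormedSpace 𝕜 E]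
    [SeminormedAddCommGroup F] [NormedSpace 𝕜 F] {p : Filter ι} {T : ι → E →L[𝕜] F}
    {S : E →L[𝕜] F} (hTS : Tendsto T p (nhds S)) {x : κ → E} {C : ℝ} (hx : ∀ n, ‖x n‖ ≤ C) :
    TendstoUniformly (fun k n => T k (x n)) (fun n => S (x n)) p := by
  rw [Metric.tendstoUniformly_iff]
  intro ε hε
  have hsmall : Tendsto (fun k => ‖T k - S‖ * C) p (nhds 0) := by
    simpa using (tendsto_iff_norm_sub_tendsto_zero.1 hTS).mul_const C
  filter_upwards [hsmall.eventually_lt_const hε] with k hk n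
  calc dist (S (x n)) (T k (x n)) = ‖(T k - S) (x n)‖ := by
        rw [dist_comm, dist_eq_norm, sub_apply]
    _ ≤ ‖T k - S‖ * C := (le_opNorm _ _).trans (by gcongr; exact hx n)
    _ < ε := hk

theorem uMWeaklyCompact_closed_general
    {E F : Type*} [NormedAddCommGroup E] [Lattice E] [HasSolidNorm E] [IsOrderedAddMonoid E] [NormedSpace ℝ E]
    [NormedAddCommGroup F] [Lattice F] [HasSolidNorm F] [IsOrderedAddMonoid F] [NormedSpace ℝ F]
    (T : ℕ → E →L[ℝ] F) (S : E →L[ℝ] F)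
    (hlim : Tendsto T atTop (nhds S))
    (hT : ∀ k, UMWeaklyCompact (T k)) :
    UMWeaklyCompact S := by
  rintro x ⟨C, hC⟩ hdisj
  exact UnNullSeq.of_tendstoUniformly (fun k => hT k x ⟨C, hC⟩ hdisj)
    (ContinuousLinearMap.tendstoUniformly_apply_of_tendsto hlim hC)

/-- the u-M-weakly compact operators are norm closed: an operator
norm limit of u-M-weakly compact operators is u-M-weakly compact. -/
theorem uMWeaklyCompact_closed
    {E F : Type*} [NormedAddCommGroup E] [Lattice E] [HasSolidNorm E] [IsOrderedAddMonoid E] [NormedSpace ℝ E] [CompleteSpace E]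
    [NormedAddCommGroup F] [Lattice F] [HasSolidNorm F] [IsOrderedAddMonoid F] [NormedSpace ℝ F] [CompleteSpace F]
    (T : ℕ → E →L[ℝ] F) (S : E →L[ℝ] F)
    (hlim : Tendsto T atTop (nhds S))
    (hT : ∀ k, UMWeaklyCompact (T k)) :
    UMWeaklyCompact S :=
  uMWeaklyCompact_closed_general T S hlim hT
end

section
/- Let X and E be Banach lattices and let 0 ≤ S ≤ T be positive operators from X to E. If T is u-L-weakly compact, then S is u-L-weakly compact. -/
open Filter

/-- The solid hull of the image of the closed unit ball under `T`. -/
def SolTU {X E : Type*} [NormedAddCommGroup X] [Lattice X] [HasSolidNorm X] [IsOrderedAddMonoid X] [NormedSpace ℝ X]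
    [NormedAddCommGroup E] [Lattice E] [HasSolidNorm E] [IsOrderedAddMonoid E] [NormedSpace ℝ E] (T : X →L[ℝ] E) : Set E :=
  {y : E | ∃ u : X, ‖u‖ ≤ 1 ∧ |y| ≤ |T u|}

/-- `T` is unbounded L-weakly compact. -/
def ULWeaklyCompact {X E : Type*} [NormedAddCommGroup X] [Lattice X] [HasSolidNorm X] [IsOrderedAddMonoid X] [NormedSpace ℝ X]
    [NormedAddCommGroup E] [Lattice E] [HasSolidNorm E] [IsOrderedAddMonoid E] [NormedSpace ℝ E] (T : X →L[ℝ] E) : Prop :=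
  ∀ y : ℕ → E, (∀ n, y n ∈ SolTU T) → (∀ n m, n ≠ m → |y n| ⊓ |y m| = 0) →
    UnNullSeq y

/-- domination for u-L-weakly compact operators: if `0 ≤ S ≤ T`
are positive operators between Banach lattices and `T` is u-L-weakly compact,
then `S` is u-L-weakly compact. -/
theorem uLWeaklyCompact_domination
    {X E : Type*} [NormedAddCommGroup X] [Lattice X] [HasSolidNorm X] [IsOrderedAddMonoid X] [NormedSpace ℝ X] [CompleteSpace X]
    [NormedAddCommGroup E] [Lattice E] [HasSolidNorm E] [IsOrderedAddMonoid E] [NormedSpace ℝ E] [CompleteSpace E]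
    (S T : X →L[ℝ] E)
    (hSpos : ∀ x : X, 0 ≤ x → 0 ≤ S x)
    (hST : ∀ x : X, 0 ≤ x → S x ≤ T x)
    (hT : ULWeaklyCompact T) :
    ULWeaklyCompact S := by
  intro y hy hd
  refine hT y (fun n => ?_) hd
  obtain ⟨u, hu, hle⟩ := hy n
  have hmono : ∀ a b : X, a ≤ b → S a ≤ S b := by
    intro a b hab
    have := hSpos (b - a) (by simpa using sub_nonneg.mpr hab)
    simpa [map_sub, sub_nonneg] using this
  have h1 : |S u| ≤ S |u| := by
    refine sup_le (hmono u |u| (_root_.le_abs_self u)) ?_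
    have := hmono (-|u|) u (by simpa using neg_le_neg (_root_.le_abs_self (-u) |>.trans_eq (abs_neg u)))
    simpa [map_neg, neg_le] using this
  have h2 : S |u| ≤ T |u| := hST _ (abs_nonneg u)
  have h3 : 0 ≤ T |u| := le_trans (hSpos _ (abs_nonneg u)) h2
  exact ⟨|u|, by rwa [norm_abs_eq_norm], hle.trans (h1.trans (h2.trans_eq (abs_of_nonneg h3).symm))⟩
end
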